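/- Let 0 < α < 2 and 0 ≤ λ satisfy λ < 2α and λ < 2. Then there exists a constant C > 0 such that for every x ∈ T²: ∫_{T²} ∫_{T²} |y − z|^{−λ} · |x − y|^{α−2} · |x − z|^{α−2} dy dz ≤ C, where the integrals are with respect to the Haar (Lebesgue) measure on T². -/

import Mathlib

/-!
Write `β = 2 - α`. The triangle inequality gives `|y - z| ≤ 2 max(|x - y|, |x - z|)`, so if
`|x - y| ≤ |x - z|` we may trade the power `r` of `|x - z|^{-β}` for `2^r |y - z|^{-r}` and the
remaining `|x - z|^{-(β - r)}` for `|x - y|^{-(β - r)}`. This bounds the integrand by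
`2^r (|x - y|^{-q} + |x - z|^{-q}) |y - z|^{-p}` with `p = λ + r`, `q = 2β - r`, and the
hypotheses on `α, λ` leave room for `0 ≤ r ≤ β` with `p, q < 2`. Each factor is then integrable
over `T²` uniformly in the base point: the torus distance dominates the geometric mean of the two
circle distances, so `∫ |w - v|^{-s} dv` is at most the square of `∫_{ℝ/2πℤ} ‖u‖^{-s/2} du`,
which is finite for `s < 2`.
-/

open scoped Real ENNReal

noncomputable def enorm2 (x : ℝ × ℝ) : ℝ := Real.sqrt (x.1 ^ 2 + x.2 ^ 2)

/-- The quotient (torus) norm on `T² = (ℝ/2πℤ)²`. -/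
noncomputable def torusNorm2 (x : ℝ × ℝ) : ℝ :=
  ⨅ m : ℤ × ℤ, enorm2 (x.1 - 2 * π * (m.1 : ℝ), x.2 - 2 * π * (m.2 : ℝ))

noncomputable def torusDist2 (x y : ℝ × ℝ) : ℝ := torusNorm2 (x.1 - y.1, x.2 - y.2)

/-- A fundamental domain for `T² = (ℝ/2πℤ)²`, identified with `[-π, π)²`;
Lebesgue measure on it is the Haar measure of `T²` (of total mass `(2π)²`). -/
def torusBox : Set (ℝ × ℝ) := Set.Ico (-π) π ×ˢ Set.Ico (-π) π

open MeasureTheory Set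

section ENNRealRpow

open ENNReal

variable {a b c u v w : ℝ≥0∞}

lemma ENNReal.rpow_neg_le_rpow_neg (h : a ≤ b) {s : ℝ} (hs : 0 ≤ s) : b ^ (-s) ≤ a ^ (-s) := by
  rw [rpow_neg, rpow_neg]
  exact ENNReal.inv_le_inv.2 (rpow_le_rpow h hs)

lemma ENNReal.rpow_neg_le_mul_rpow_neg_half (ha : a ≤ c) (hb : b ≤ c) {s : ℝ} (hs : 0 ≤ s) :
    c ^ (-s) ≤ a ^ (-(s / 2)) * b ^ (-(s / 2)) := by
  have hs2 : 0 ≤ s / 2 := by positivity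
  calc c ^ (-s) = c ^ (-(s / 2)) * c ^ (-(s / 2)) := by
        rw [← pow_two, ← rpow_natCast, ← rpow_mul]; norm_num
    _ ≤ a ^ (-(s / 2)) * b ^ (-(s / 2)) :=
        mul_le_mul' (rpow_neg_le_rpow_neg ha hs2) (rpow_neg_le_rpow_neg hb hs2)

lemma ENNReal.rpow_mul_rpow_mul_rpow_le {lam β r : ℝ} (hlam : 0 ≤ lam) (hr : 0 ≤ r)
    (hrβ : r ≤ β) (hwv : w ≤ v) (hwu : w ≤ 2 * u) :
    u ^ lam * (v ^ β * w ^ β) ≤ 2 ^ r * (u ^ (lam + r) * v ^ (2 * β - r)) := by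
  have hβr : 0 ≤ β - r := by linarith
  calc u ^ lam * (v ^ β * w ^ β) = u ^ lam * (v ^ β * (w ^ r * w ^ (β - r))) := by
        rw [← rpow_add_of_nonneg _ _ hr hβr, add_sub_cancel]
    _ ≤ u ^ lam * (v ^ β * ((2 * u) ^ r * v ^ (β - r))) := by
        gcongr
    _ = 2 ^ r * (u ^ (lam + r) * v ^ (2 * β - r)) := by
        rw [mul_rpow_of_nonneg _ _ hr, rpow_add_of_nonneg _ _ hlam hr,
          show 2 * β - r = β + (β - r) by ring, rpow_add_of_nonneg _ _ (hr.trans hrβ) hβr]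
        ring

lemma ENNReal.rpow_neg_mul_rpow_neg_mul_rpow_neg_le {lam β r : ℝ} (hlam : 0 ≤ lam) (hr : 0 ≤ r)
    (hrβ : r ≤ β) (hbc : b ≤ c) (habc : a ≤ b + c) :
    a ^ (-lam) * (b ^ (-β) * c ^ (-β)) ≤ 2 ^ r * (a ^ (-(lam + r)) * b ^ (-(2 * β - r))) := by
  have hac : (2 * c)⁻¹ ≤ a⁻¹ := ENNReal.inv_le_inv.2 (habc.trans (by rw [two_mul]; gcongr))
  rw [ENNReal.mul_inv (by simp) (by simp), mul_comm, ← div_eq_mul_inv,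
    ENNReal.div_le_iff_le_mul (by simp) (by simp), mul_comm] at hac
  simp only [rpow_neg, ← inv_rpow]
  exact rpow_mul_rpow_mul_rpow_le hlam hr hrβ (ENNReal.inv_le_inv.2 hbc) hac

end ENNRealRpow

section DoubleIntegral

variable {X : Type*} [MeasurableSpace X] {μ : Measure X}
  {g : X → ℝ≥0∞} {k : X → X → ℝ≥0∞} {K : ℝ≥0∞}

lemma lintegral_lintegral_mul_le (hg : Measurable g) (hk : ∀ y, Measurable (k y))
    (hK : ∀ y, ∫⁻ z, k y z ∂μ ≤ K) :
    ∫⁻ y, ∫⁻ z, g y * k y z ∂μ ∂μ ≤ (∫⁻ y, g y ∂μ) * K :=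
  calc ∫⁻ y, ∫⁻ z, g y * k y z ∂μ ∂μ = ∫⁻ y, g y * ∫⁻ z, k y z ∂μ ∂μ :=
        lintegral_congr fun y => lintegral_const_mul _ (hk y)
    _ ≤ ∫⁻ y, g y * K ∂μ := lintegral_mono fun y => mul_le_mul_right (hK y) _
    _ = (∫⁻ y, g y ∂μ) * K := lintegral_mul_const _ hg

lemma lintegral_lintegral_mul_add_mul_swap_le [SFinite μ] (hg : Measurable g)
    (hk : Measurable (Function.uncurry k)) (hk_symm : ∀ y z, k y z = k z y)
    (hK : ∀ y, ∫⁻ z, k y z ∂μ ≤ K) :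
    ∫⁻ y, ∫⁻ z, (g y * k y z + g z * k y z) ∂μ ∂μ ≤ 2 * ((∫⁻ y, g y ∂μ) * K) := by
  have hk_sec : ∀ y, Measurable (k y) := fun y => hk.comp measurable_prodMk_left
  have hswap : ∫⁻ y, ∫⁻ z, g z * k y z ∂μ ∂μ = ∫⁻ y, ∫⁻ z, g y * k y z ∂μ ∂μ := by
    rw [lintegral_lintegral_swap ((hg.comp measurable_snd).mul hk).aemeasurable]
    simp_rw [hk_symm]
  calc ∫⁻ y, ∫⁻ z, (g y * k y z + g z * k y z) ∂μ ∂μ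
      = ∫⁻ y, ∫⁻ z, g y * k y z ∂μ ∂μ + ∫⁻ y, ∫⁻ z, g z * k y z ∂μ ∂μ := by
        rw [← lintegral_add_left (Measurable.lintegral_prod_right (f := fun y z => g y * k y z)
          ((hg.comp measurable_fst).mul hk))]
        exact lintegral_congr fun y => lintegral_add_left ((hk_sec y).const_mul _) _
    _ ≤ 2 * ((∫⁻ y, g y ∂μ) * K) := by
        rw [hswap, ← two_mul]
        gcongr
        exact lintegral_lintegral_mul_le hg hk_sec hK

end DoubleIntegral

lemma setLIntegral_ball_enorm_rpow_neg_lt_top {E : Type*} [NormedAddCommGroup E]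
    [NormedSpace ℝ E] [FiniteDimensional ℝ E] [Nontrivial E] [MeasurableSpace E] [BorelSpace E]
    (μ : Measure E) [μ.IsAddHaarMeasure] {τ : ℝ} (hτ : τ < Module.finrank ℝ E) (r : ℝ) :
    ∫⁻ x in Metric.ball 0 r, ‖x‖ₑ ^ (-τ) ∂μ < ∞ := by
  have hint : IntegrableOn (fun x : E => ‖x‖ ^ (-τ)) (Metric.ball 0 r) μ :=
    integrableOn_ball_of_norm_le_rpow Module.finrank_pos hτ (C := 1)
      (ae_of_all _ fun x => by simp [abs_of_nonneg (Real.rpow_nonneg (norm_nonneg x) _)])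
      (measurable_norm.pow_const _).aestronglyMeasurable
  refine lt_of_eq_of_lt (lintegral_congr_ae ?_) hint.2
  filter_upwards [ae_restrict_of_ae (μ.ae_ne 0)] with x hx
  rw [Real.enorm_of_nonneg (Real.rpow_nonneg (norm_nonneg x) _),
    ← ENNReal.ofReal_rpow_of_pos (norm_pos_iff.2 hx), ofReal_norm]

namespace AddCircle

variable {T : ℝ} [hT : Fact (0 < T)]

lemma setLIntegral_Ico_comp_sub (f : AddCircle T → ℝ≥0∞) (c t : ℝ) :
    ∫⁻ v in Ico t (t + T), f ↑(c - v) = ∫⁻ u, f u := by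
  have hpre : (fun v => c - v) ⁻¹' Ioc (c - (t + T)) (c - (t + T) + T) = Ico t (t + T) := by
    ext v
    simp only [mem_preimage, mem_Ioc, mem_Ico]
    constructor <;> intro h <;> constructor <;> linarith [h.1, h.2]
  rw [← hpre, (Measure.measurePreserving_sub_left volume c).setLIntegral_comp_preimage_emb
    (MeasurableEquiv.subLeft c).measurableEmbedding (fun w : ℝ => f w)]
  exact AddCircle.lintegral_preimage T _ f

lemma lintegral_enorm_rpow_neg_lt_top {τ : ℝ} (hτ : τ < 1) :
    ∫⁻ u : AddCircle T, ‖u‖ₑ ^ (-τ) < ∞ := by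
  rw [← AddCircle.lintegral_preimage T (-(T / 2))]
  calc ∫⁻ t in Ioc (-(T / 2)) (-(T / 2) + T), ‖(t : AddCircle T)‖ₑ ^ (-τ)
      = ∫⁻ t in Ioc (-(T / 2)) (-(T / 2) + T), ‖t‖ₑ ^ (-τ) := by
        refine setLIntegral_congr_fun measurableSet_Ioc fun t ht => ?_
        have hT2 : |t| ≤ |T| / 2 := by
          rw [abs_of_pos hT.out, abs_le]
          constructor <;> linarith [ht.1, ht.2]
        rw [← ofReal_norm, ← ofReal_norm, Real.norm_eq_abs,
          (norm_coe_eq_abs_iff T hT.out.ne').2 hT2]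
    _ ≤ ∫⁻ t in Metric.ball (0 : ℝ) T, ‖t‖ₑ ^ (-τ) := by
        refine lintegral_mono_set fun t ht => ?_
        rw [mem_ball_zero_iff, Real.norm_eq_abs, abs_lt]
        constructor <;> linarith [ht.1, ht.2, hT.out]
    _ < ∞ := setLIntegral_ball_enorm_rpow_neg_lt_top volume (by simpa using hτ) T

end AddCircle

lemma enorm2_add_le (a b : ℝ × ℝ) : enorm2 (a + b) ≤ enorm2 a + enorm2 b := by
  simp only [enorm2, ← Complex.norm_add_mul_I, Prod.fst_add, Prod.snd_add]
  refine le_of_eq_of_le ?_ (norm_add_le ((a.1 : ℂ) + a.2 * Complex.I) (b.1 + b.2 * Complex.I))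
  congr 1; push_cast; ring

lemma enorm2_neg (a : ℝ × ℝ) : enorm2 (-a) = enorm2 a := by
  simp [enorm2]

lemma abs_fst_le_enorm2 (a : ℝ × ℝ) : |a.1| ≤ enorm2 a :=
  Real.abs_le_sqrt (le_add_of_nonneg_right (sq_nonneg _))

lemma abs_snd_le_enorm2 (a : ℝ × ℝ) : |a.2| ≤ enorm2 a :=
  Real.abs_le_sqrt (le_add_of_nonneg_left (sq_nonneg _))

noncomputable def torusLattice (m : ℤ × ℤ) : ℝ × ℝ := (2 * π * m.1, 2 * π * m.2)

lemma torusLattice_add (m n : ℤ × ℤ) :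
    torusLattice (m + n) = torusLattice m + torusLattice n := by
  ext <;> simp [torusLattice] <;> ring

lemma torusLattice_neg (m : ℤ × ℤ) : torusLattice (-m) = -torusLattice m := by
  ext <;> simp [torusLattice]

lemma torusNorm2_eq_iInf (x : ℝ × ℝ) : torusNorm2 x = ⨅ m, enorm2 (x - torusLattice m) := rfl

lemma torusNorm2_le (x : ℝ × ℝ) (m : ℤ × ℤ) : torusNorm2 x ≤ enorm2 (x - torusLattice m) :=
  ciInf_le ⟨0, by rintro _ ⟨n, rfl⟩; exact Real.sqrt_nonneg _⟩ m

lemma torusNorm2_add_le (u v : ℝ × ℝ) : torusNorm2 (u + v) ≤ torusNorm2 u + torusNorm2 v := by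
  refine le_ciInf_add_ciInf fun m n => (torusNorm2_le _ (m + n)).trans ?_
  rw [torusLattice_add, add_sub_add_comm]
  exact enorm2_add_le _ _

lemma torusNorm2_neg (u : ℝ × ℝ) : torusNorm2 (-u) = torusNorm2 u := by
  have key : ∀ x, torusNorm2 (-x) ≤ torusNorm2 x := fun x => by
    rw [torusNorm2_eq_iInf x]
    refine le_ciInf fun m => (torusNorm2_le _ (-m)).trans_eq ?_
    rw [torusLattice_neg, sub_neg_eq_add, ← enorm2_neg, neg_add, neg_neg, ← sub_eq_add_neg]
  exact le_antisymm (key u) (by simpa using key (-u))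

lemma torusDist2_eq (x y : ℝ × ℝ) : torusDist2 x y = torusNorm2 (x - y) := rfl

lemma torusDist2_comm (x y : ℝ × ℝ) : torusDist2 x y = torusDist2 y x := by
  rw [torusDist2_eq, torusDist2_eq, ← neg_sub, torusNorm2_neg]

lemma torusDist2_le_add (x y z : ℝ × ℝ) : torusDist2 y z ≤ torusDist2 x y + torusDist2 x z := by
  rw [torusDist2_comm x y, torusDist2_eq, torusDist2_eq, torusDist2_eq]
  simpa using torusNorm2_add_le (y - x) (x - z)

lemma measurable_torusNorm2 : Measurable torusNorm2 :=
  Measurable.iInf fun m => by unfold enorm2; fun_prop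

instance Real.fact_zero_lt_two_pi : Fact (0 < 2 * π) := ⟨Real.two_pi_pos⟩

lemma AddCircle.coe_sub_mul_intCast (p t : ℝ) (m : ℤ) : ((t - p * m : ℝ) : AddCircle p) = t := by
  rw [mul_comm, ← zsmul_eq_mul, AddCircle.coe_sub, AddCircle.coe_zsmul, AddCircle.coe_period,
    smul_zero, sub_zero]

lemma norm_coe_fst_le_torusNorm2 (x : ℝ × ℝ) : ‖(x.1 : AddCircle (2 * π))‖ ≤ torusNorm2 x :=
  le_ciInf fun m => calc
    ‖(x.1 : AddCircle (2 * π))‖ = ‖((x.1 - 2 * π * m.1 : ℝ) : AddCircle (2 * π))‖ := by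
      rw [AddCircle.coe_sub_mul_intCast]
    _ ≤ |x.1 - 2 * π * m.1| := QuotientAddGroup.norm_mk_le_norm
    _ ≤ _ := abs_fst_le_enorm2 (x - torusLattice m)

lemma norm_coe_snd_le_torusNorm2 (x : ℝ × ℝ) : ‖(x.2 : AddCircle (2 * π))‖ ≤ torusNorm2 x :=
  le_ciInf fun m => calc
    ‖(x.2 : AddCircle (2 * π))‖ = ‖((x.2 - 2 * π * m.2 : ℝ) : AddCircle (2 * π))‖ := by
      rw [AddCircle.coe_sub_mul_intCast]
    _ ≤ |x.2 - 2 * π * m.2| := QuotientAddGroup.norm_mk_le_norm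
    _ ≤ _ := abs_snd_le_enorm2 (x - torusLattice m)

noncomputable def torusKernelBound (s : ℝ) : ℝ≥0∞ :=
  (∫⁻ u : AddCircle (2 * π), ‖u‖ₑ ^ (-(s / 2))) ^ 2

lemma torusKernelBound_ne_top {s : ℝ} (hs : s < 2) : torusKernelBound s ≠ ∞ :=
  ENNReal.pow_ne_top (AddCircle.lintegral_enorm_rpow_neg_lt_top (by linarith)).ne

lemma setLIntegral_torusBox_rpow_neg_torusDist2_le (w : ℝ × ℝ) {s : ℝ} (hs : 0 ≤ s) :
    ∫⁻ v in torusBox, ENNReal.ofReal (torusDist2 w v) ^ (-s) ≤ torusKernelBound s := by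
  set φ : AddCircle (2 * π) → ℝ≥0∞ := fun u => ‖u‖ₑ ^ (-(s / 2))
  have hφ : ∀ c : ℝ, Measurable fun t : ℝ => φ ↑(c - t) := fun c =>
    (AddCircle.measurable_mk'.comp (measurable_const.sub measurable_id)).enorm.pow_const _
  have hbox : Ico (-π) π = Ico (-π) (-π + 2 * π) := by ring_nf
  calc ∫⁻ v in torusBox, ENNReal.ofReal (torusDist2 w v) ^ (-s)
      ≤ ∫⁻ v in torusBox, φ ↑(w.1 - v.1) * φ ↑(w.2 - v.2) := by
        refine lintegral_mono fun v => ENNReal.rpow_neg_le_mul_rpow_neg_half ?_ ?_ hs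
        · rw [← ofReal_norm]
          exact ENNReal.ofReal_le_ofReal (norm_coe_fst_le_torusNorm2 (w - v))
        · rw [← ofReal_norm]
          exact ENNReal.ofReal_le_ofReal (norm_coe_snd_le_torusNorm2 (w - v))
    _ = (∫⁻ t in Ico (-π) π, φ ↑(w.1 - t)) * ∫⁻ t in Ico (-π) π, φ ↑(w.2 - t) := by
        rw [torusBox, Measure.volume_eq_prod, ← Measure.prod_restrict]
        exact lintegral_prod_mul (hφ _).aemeasurable (hφ _).aemeasurable
    _ = torusKernelBound s := by
        rw [hbox, AddCircle.setLIntegral_Ico_comp_sub, AddCircle.setLIntegral_Ico_comp_sub,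
          torusKernelBound, sq]

lemma rpow_neg_torusDist2_mul_le (x y z : ℝ × ℝ) {lam β r : ℝ} (hlam : 0 ≤ lam) (hr : 0 ≤ r)
    (hrβ : r ≤ β) :
    ENNReal.ofReal (torusDist2 y z) ^ (-lam) *
        (ENNReal.ofReal (torusDist2 x y) ^ (-β) * ENNReal.ofReal (torusDist2 x z) ^ (-β))
      ≤ 2 ^ r * (ENNReal.ofReal (torusDist2 x y) ^ (-(2 * β - r)) *
            ENNReal.ofReal (torusDist2 y z) ^ (-(lam + r)) +
          ENNReal.ofReal (torusDist2 x z) ^ (-(2 * β - r)) *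
            ENNReal.ofReal (torusDist2 y z) ^ (-(lam + r))) := by
  have htri : ENNReal.ofReal (torusDist2 y z)
      ≤ ENNReal.ofReal (torusDist2 x y) + ENNReal.ofReal (torusDist2 x z) :=
    ENNReal.ofReal_le_ofReal (torusDist2_le_add x y z) |>.trans ENNReal.ofReal_add_le
  rcases le_total (torusDist2 x y) (torusDist2 x z) with h | h
  · refine (ENNReal.rpow_neg_mul_rpow_neg_mul_rpow_neg_le hlam hr hrβ
      (ENNReal.ofReal_le_ofReal h) htri).trans ?_
    rw [mul_comm (ENNReal.ofReal (torusDist2 y z) ^ _)]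
    gcongr
    exact le_self_add
  · rw [mul_comm (ENNReal.ofReal (torusDist2 x y) ^ _)]
    refine (ENNReal.rpow_neg_mul_rpow_neg_mul_rpow_neg_le hlam hr hrβ
      (ENNReal.ofReal_le_ofReal h) (htri.trans_eq (add_comm _ _))).trans ?_
    rw [mul_comm (ENNReal.ofReal (torusDist2 y z) ^ _)]
    gcongr
    exact le_add_self

lemma exists_exponent_split {α lam : ℝ} (hα0 : 0 < α) (hα2 : α < 2) (hlam1 : lam < 2 * α)
    (hlam2 : lam < 2) :
    ∃ r, 0 ≤ r ∧ r ≤ 2 - α ∧ lam + r < 2 ∧ 2 * (2 - α) - r < 2 := by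
  obtain ⟨r, hlo, hhi⟩ :=
    exists_between (show max 0 (2 * (2 - α) - 2) < min (2 - α) (2 - lam) by
      simp only [max_lt_iff, lt_min_iff]; refine ⟨⟨?_, ?_⟩, ?_, ?_⟩ <;> linarith)
  rw [max_lt_iff] at hlo
  rw [lt_min_iff] at hhi
  exact ⟨r, hlo.1.le, hhi.1.le, by linarith, by linarith⟩

lemma lintegral_torusBox_singular_kernel_le (x : ℝ × ℝ) {lam β r : ℝ} (hlam : 0 ≤ lam)
    (hr : 0 ≤ r) (hrβ : r ≤ β) :
    ∫⁻ y in torusBox, ∫⁻ z in torusBox,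
        ENNReal.ofReal (torusDist2 y z) ^ (-lam) *
          (ENNReal.ofReal (torusDist2 x y) ^ (-β) * ENNReal.ofReal (torusDist2 x z) ^ (-β))
      ≤ 2 ^ r * (2 * (torusKernelBound (2 * β - r) * torusKernelBound (lam + r))) := by
  set d : ℝ × ℝ → ℝ × ℝ → ℝ≥0∞ := fun y z => ENNReal.ofReal (torusDist2 y z)
  have hd : Measurable (Function.uncurry d) :=
    ENNReal.measurable_ofReal.comp <|
      measurable_torusNorm2.comp (measurable_fst.sub measurable_snd)
  have hp : 0 ≤ lam + r := by linarith
  have hq : 0 ≤ 2 * β - r := by linarith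
  calc ∫⁻ y in torusBox, ∫⁻ z in torusBox, d y z ^ (-lam) * (d x y ^ (-β) * d x z ^ (-β))
      ≤ ∫⁻ y in torusBox, ∫⁻ z in torusBox, 2 ^ r *
          (d x y ^ (-(2 * β - r)) * d y z ^ (-(lam + r)) +
            d x z ^ (-(2 * β - r)) * d y z ^ (-(lam + r))) :=
        lintegral_mono fun y => lintegral_mono fun z =>
          rpow_neg_torusDist2_mul_le x y z hlam hr hrβ
    _ = 2 ^ r * ∫⁻ y in torusBox, ∫⁻ z in torusBox,
          (d x y ^ (-(2 * β - r)) * d y z ^ (-(lam + r)) +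
            d x z ^ (-(2 * β - r)) * d y z ^ (-(lam + r))) := by
        simp_rw [lintegral_const_mul' _ _ (ENNReal.rpow_ne_top_of_nonneg hr ENNReal.ofNat_ne_top)]
    _ ≤ 2 ^ r * (2 * (torusKernelBound (2 * β - r) * torusKernelBound (lam + r))) := by
        gcongr
        refine (lintegral_lintegral_mul_add_mul_swap_le
          ((hd.comp measurable_prodMk_left).pow_const _) (hd.pow_const _)
          (fun y z => by simp only [torusDist2_comm])
          (fun y => setLIntegral_torusBox_rpow_neg_torusDist2_le y hp)).trans ?_
        gcongr
        exact setLIntegral_torusBox_rpow_neg_torusDist2_le x hq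

/-- the Case 1/Case 2 integral bound in the proof of Proposition 1.1:
for `0 < α < 2` and `0 ≤ λ` with `λ < 2α` and `λ < 2`, there is `C > 0` such that for
every `x ∈ T²`: `∫_{T²} ∫_{T²} |y−z|^{−λ} |x−y|^{α−2} |x−z|^{α−2} dy dz ≤ C`
(in particular the integral is finite; singular factors are interpreted as `+∞` on
their singular sets, via the `ℝ≥0∞`-valued power). -/
theorem singular_double_integral_bound (α lam : ℝ) (hα0 : 0 < α) (hα2 : α < 2)
    (hlam0 : 0 ≤ lam) (hlam1 : lam < 2 * α) (hlam2 : lam < 2) :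
    ∃ C : ℝ, 0 < C ∧ ∀ x : ℝ × ℝ,
      (∫⁻ y in torusBox, ∫⁻ z in torusBox,
          ENNReal.ofReal (torusDist2 y z) ^ (-lam) *
            (ENNReal.ofReal (torusDist2 x y) ^ (α - 2) *
              ENNReal.ofReal (torusDist2 x z) ^ (α - 2)))
        ≤ ENNReal.ofReal C := by
  obtain ⟨r, hr0, hrβ, hp, hq⟩ := exists_exponent_split hα0 hα2 hlam1 hlam2
  set M := 2 ^ r * (2 * (torusKernelBound (2 * (2 - α) - r) * torusKernelBound (lam + r)))
  have hM : M ≠ ∞ := ENNReal.mul_ne_top (ENNReal.rpow_ne_top_of_nonneg hr0 ENNReal.ofNat_ne_top)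
    (ENNReal.mul_ne_top ENNReal.ofNat_ne_top
      (ENNReal.mul_ne_top (torusKernelBound_ne_top hq) (torusKernelBound_ne_top hp)))
  refine ⟨M.toReal + 1, by positivity, fun x => ?_⟩
  rw [show α - 2 = -(2 - α) by ring]
  exact (lintegral_torusBox_singular_kernel_le x hlam0 hr0 hrβ).trans
    ((ENNReal.le_ofReal_iff_toReal_le hM (by positivity)).2 (by linarith))
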